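/- Let x ≠ y in ℝ³, let G : ℝ³ \ {0} → ℂ be differentiable at x − y, let a, b ∈ ℝ³, let A be a real 3×3 matrix, and let τ₁, τ₂ ∈ ℝ³ be linearly independent with ν = (τ₁ × τ₂)/‖τ₁ × τ₂‖. Define J(t) = ‖((I + tA)τ₁) × ((I + tA)τ₂)‖ / ‖τ₁ × τ₂‖. Then the function t ↦ G( (x − y) + t(a − b) ) · J(t) is differentiable at t = 0 and its derivative equals DG(x − y)[a − b] + G(x − y) · ( tr A − ⟨A ν, ν⟩ ), where DG(x − y)[a − b] is the Fréchet derivative of G at x − y applied to a − b. -/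

import Mathlib

/-! With c = τ₁ × τ₂, bilinearity makes the cross product of (I + tA)τ₁ and (I + tA)τ₂ the
quadratic c + t d + t² e with d = Aτ₁ × τ₂ + τ₁ × Aτ₂, so J'(0) = ⟨c, d⟩ / |c|². The coordinate
identity ⟨c, d⟩ = tr A |c|² − ⟨Ac, c⟩ turns this into tr A − ⟨Aν, ν⟩; the product and chain
rules, with J(0) = 1, give the rest. -/

open Matrix

theorem cross_dotProduct_cross_mulVec_add {R : Type*} [CommRing R]
    (A : Matrix (Fin 3) (Fin 3) R) (u v : Fin 3 → R) :
    u ⨯₃ v ⬝ᵥ ((A *ᵥ u) ⨯₃ v + u ⨯₃ (A *ᵥ v)) =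
      A.trace * (u ⨯₃ v ⬝ᵥ u ⨯₃ v) - A *ᵥ (u ⨯₃ v) ⬝ᵥ u ⨯₃ v := by
  simp only [cross_apply, dotProduct, mulVec, trace, diag, Fin.sum_univ_three, Pi.add_apply,
    Fin.isValue, cons_val_zero, cons_val_one, cons_val]
  ring

theorem cross_one_add_smul_mulVec {R : Type*} [CommRing R]
    (A : Matrix (Fin 3) (Fin 3) R) (u v : Fin 3 → R) (t : R) :
    ((1 + t • A) *ᵥ u) ⨯₃ ((1 + t • A) *ᵥ v) =
      u ⨯₃ v + t • ((A *ᵥ u) ⨯₃ v + u ⨯₃ (A *ᵥ v)) + t ^ 2 • ((A *ᵥ u) ⨯₃ (A *ᵥ v)) := by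
  simp only [add_mulVec, one_mulVec, smul_mulVec, map_add, map_smul, LinearMap.add_apply,
    LinearMap.smul_apply]
  module

theorem hasDerivAt_add_smul_add_sq_smul {𝕜 E : Type*} [NontriviallyNormedField 𝕜]
    [NormedAddCommGroup E] [NormedSpace 𝕜 E] (c d e : E) :
    HasDerivAt (fun t : 𝕜 => c + t • d + t ^ 2 • e) d 0 := by
  have h := (((hasDerivAt_id (0 : 𝕜)).smul_const d).const_add c).fun_add
    ((hasDerivAt_pow 2 (0 : 𝕜)).smul_const e)
  simpa using h

theorem HasDerivAt.dotProduct {𝕜 ι : Type*} [NontriviallyNormedField 𝕜] [Fintype ι]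
    {u v : 𝕜 → ι → 𝕜} {u' v' : ι → 𝕜} {t : 𝕜} (hu : HasDerivAt u u' t) (hv : HasDerivAt v v' t) :
    HasDerivAt (fun s => u s ⬝ᵥ v s) (u' ⬝ᵥ v t + u t ⬝ᵥ v') t := by
  rw [hasDerivAt_pi] at hu hv
  have h := HasDerivAt.fun_sum fun i (_ : i ∈ Finset.univ) => (hu i).mul (hv i)
  rw [Finset.sum_add_distrib] at h
  exact h

theorem dotProduct_self_pos {ι : Type*} [Fintype ι] {c : ι → ℝ} (hc : c ≠ 0) : 0 < c ⬝ᵥ c :=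
  (Finset.sum_nonneg fun i _ => mul_self_nonneg (c i)).lt_of_ne'
    (dotProduct_self_eq_zero.not.mpr hc)

theorem HasDerivAt.sqrt_dotProduct_self {ι : Type*} [Fintype ι] {u : ℝ → ι → ℝ} {u' : ι → ℝ}
    {t : ℝ} (hu : HasDerivAt u u' t) (h : u t ≠ 0) :
    HasDerivAt (fun s => √(u s ⬝ᵥ u s)) (u t ⬝ᵥ u' / √(u t ⬝ᵥ u t)) t := by
  convert (hu.dotProduct hu).sqrt (dotProduct_self_pos h).ne' using 1
  rw [dotProduct_comm u']
  ring

theorem mulVec_inv_sqrt_smul_dotProduct {ι : Type*} [Fintype ι] (A : Matrix ι ι ℝ) (c : ι → ℝ) :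
    A *ᵥ ((√(c ⬝ᵥ c))⁻¹ • c) ⬝ᵥ ((√(c ⬝ᵥ c))⁻¹ • c) = A *ᵥ c ⬝ᵥ c / (c ⬝ᵥ c) := by
  have hc : 0 ≤ c ⬝ᵥ c := Finset.sum_nonneg fun i _ => mul_self_nonneg (c i)
  rw [mulVec_smul, smul_dotProduct, dotProduct_smul, smul_eq_mul, smul_eq_mul, ← mul_assoc,
    ← mul_inv, Real.mul_self_sqrt hc, inv_mul_eq_div]

theorem hasDerivAt_sqrt_cross_one_add_smul_mulVec_div (A : Matrix (Fin 3) (Fin 3) ℝ)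
    {τ₁ τ₂ : Fin 3 → ℝ} (hτ : LinearIndependent ℝ ![τ₁, τ₂]) :
    HasDerivAt
      (fun t : ℝ => √(((1 + t • A) *ᵥ τ₁) ⨯₃ ((1 + t • A) *ᵥ τ₂) ⬝ᵥ
          ((1 + t • A) *ᵥ τ₁) ⨯₃ ((1 + t • A) *ᵥ τ₂)) / √(τ₁ ⨯₃ τ₂ ⬝ᵥ τ₁ ⨯₃ τ₂))
      (A.trace - A *ᵥ ((√(τ₁ ⨯₃ τ₂ ⬝ᵥ τ₁ ⨯₃ τ₂))⁻¹ • τ₁ ⨯₃ τ₂) ⬝ᵥ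
        ((√(τ₁ ⨯₃ τ₂ ⬝ᵥ τ₁ ⨯₃ τ₂))⁻¹ • τ₁ ⨯₃ τ₂)) 0 := by
  have hc : τ₁ ⨯₃ τ₂ ≠ 0 := crossProduct_ne_zero_iff_linearIndependent.mpr hτ
  have hu := hasDerivAt_add_smul_add_sq_smul (𝕜 := ℝ) (τ₁ ⨯₃ τ₂)
    ((A *ᵥ τ₁) ⨯₃ τ₂ + τ₁ ⨯₃ (A *ᵥ τ₂)) ((A *ᵥ τ₁) ⨯₃ (A *ᵥ τ₂))
  simp only [← cross_one_add_smul_mulVec] at hu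
  have hu0 : ((1 + (0 : ℝ) • A) *ᵥ τ₁) ⨯₃ ((1 + (0 : ℝ) • A) *ᵥ τ₂) = τ₁ ⨯₃ τ₂ := by simp
  refine ((hu.sqrt_dotProduct_self (hu0 ▸ hc)).div_const _).congr_deriv ?_
  have hpos := dotProduct_self_pos hc
  rw [hu0, mulVec_inv_sqrt_smul_dotProduct, cross_dotProduct_cross_mulVec_add, div_div,
    Real.mul_self_sqrt hpos.le, sub_div, mul_div_cancel_right₀ _ hpos.ne']

open Matrix in
theorem stmt17_general (x y : Fin 3 → ℝ)
    (G : (Fin 3 → ℝ) → ℂ) (hG : DifferentiableAt ℝ G (x - y))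
    (a b : Fin 3 → ℝ) (A : Matrix (Fin 3) (Fin 3) ℝ)
    (τ₁ τ₂ : Fin 3 → ℝ) (hτ : LinearIndependent ℝ ![τ₁, τ₂])
    (ν : Fin 3 → ℝ)
    (hν : ν = (Real.sqrt (crossProduct τ₁ τ₂ ⬝ᵥ crossProduct τ₁ τ₂))⁻¹ • crossProduct τ₁ τ₂)
    (J : ℝ → ℝ)
    (hJ : ∀ t : ℝ, J t =
      Real.sqrt (crossProduct ((1 + t • A).mulVec τ₁) ((1 + t • A).mulVec τ₂) ⬝ᵥ
        crossProduct ((1 + t • A).mulVec τ₁) ((1 + t • A).mulVec τ₂)) /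
      Real.sqrt (crossProduct τ₁ τ₂ ⬝ᵥ crossProduct τ₁ τ₂)) :
    HasDerivAt (fun t : ℝ => G ((x - y) + t • (a - b)) * (J t : ℂ))
      (fderiv ℝ G (x - y) (a - b) +
        G (x - y) * ((A.trace - A.mulVec ν ⬝ᵥ ν : ℝ) : ℂ)) 0 := by
  rw [show J = _ from funext hJ, hν]
  have hnorm : √(τ₁ ⨯₃ τ₂ ⬝ᵥ τ₁ ⨯₃ τ₂) ≠ 0 :=
    (Real.sqrt_pos.mpr (dotProduct_self_pos
      (crossProduct_ne_zero_iff_linearIndependent.mpr hτ))).ne'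
  have hline : HasDerivAt (fun t : ℝ => (x - y) + t • (a - b)) (a - b) 0 := by
    simpa using ((hasDerivAt_id (0 : ℝ)).smul_const (a - b)).const_add (x - y)
  have hGline := hG.hasFDerivAt.comp_hasDerivAt_of_eq 0 hline (by simp)
  have hJline := (hasDerivAt_sqrt_cross_one_add_smul_mulVec_div A hτ).ofReal_comp
  refine (hGline.fun_mul hJline).congr_deriv ?_
  simp [hnorm]

open Matrix in
/-- Pointwise (d = 3) form of the first-derivative kernel formula of Corollary 4.3 of
the paper: `(d/dt)|₀ [G((x−y) + t(a−b)) J(t)] = DG(x−y)[a−b] + G(x−y)(trA − ⟨Aν,ν⟩)`. -/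
theorem stmt17 (x y : Fin 3 → ℝ) (hxy : x ≠ y)
    (G : (Fin 3 → ℝ) → ℂ) (hG : DifferentiableAt ℝ G (x - y))
    (a b : Fin 3 → ℝ) (A : Matrix (Fin 3) (Fin 3) ℝ)
    (τ₁ τ₂ : Fin 3 → ℝ) (hτ : LinearIndependent ℝ ![τ₁, τ₂])
    (ν : Fin 3 → ℝ)
    (hν : ν = (Real.sqrt (crossProduct τ₁ τ₂ ⬝ᵥ crossProduct τ₁ τ₂))⁻¹ • crossProduct τ₁ τ₂)
    (J : ℝ → ℝ)
    (hJ : ∀ t : ℝ, J t =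
      Real.sqrt (crossProduct ((1 + t • A).mulVec τ₁) ((1 + t • A).mulVec τ₂) ⬝ᵥ
        crossProduct ((1 + t • A).mulVec τ₁) ((1 + t • A).mulVec τ₂)) /
      Real.sqrt (crossProduct τ₁ τ₂ ⬝ᵥ crossProduct τ₁ τ₂)) :
    HasDerivAt (fun t : ℝ => G ((x - y) + t • (a - b)) * (J t : ℂ))
      (fderiv ℝ G (x - y) (a - b) +
        G (x - y) * ((A.trace - A.mulVec ν ⬝ᵥ ν : ℝ) : ℂ)) 0 :=
  stmt17_general x y G hG a b A τ₁ τ₂ hτ ν hν J hJ
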